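/- Let n ≥ 1 and let C, D ∈ ℝ^{n×n} be symmetric matrices with eigenvalues λ₁↓(C) ≥ … ≥ λ_n↓(C) and λ₁↓(D) ≥ … ≥ λ_n↓(D) listed in descending order. Then the maximum of tr(C P D Pᵀ) over all orthogonal matrices P ∈ O_n := {P ∈ ℝ^{n×n} : Pᵀ P = I} equals Σ_{i=1}^n λᵢ↓(C)·λᵢ↓(D), and this maximum is attained at P = P_C P_Dᵀ, where the columns of P_C (respectively P_D) form an orthonormal eigenbasis of C (respectively D) ordered consistently with the descending eigenvalues. -/

import Mathlib

/-!
Write `C = P_C Λ P_Cᵀ` and `D = P_D M P_Dᵀ` with `Λ`, `M` the diagonal matrices of descending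
eigenvalues. For orthogonal `P`, the matrix `Q = P_Cᵀ P P_D` is orthogonal and
`tr (C P D Pᵀ) = ∑ i j, λᵢ μⱼ Qᵢⱼ²`. The squares `Qᵢⱼ²` form a doubly stochastic matrix, so by
Birkhoff's theorem this linear expression is bounded by its values at permutation matrices,
which by the rearrangement inequality are at most `∑ i, λᵢ μᵢ`. The choice `P = P_C P_Dᵀ`
gives `Q = 1`.
-/

open Matrix BigOperators

noncomputable section

/-- Squared Frobenius norm of a real matrix. -/
def frobSq {m n : ℕ} (A : Matrix (Fin m) (Fin n) ℝ) : ℝ := ∑ i, ∑ j, (A i j) ^ 2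

/-- Euclidean norm of a real vector. -/
def vnorm {n : ℕ} (v : Fin n → ℝ) : ℝ := Real.sqrt (∑ i, (v i) ^ 2)

/-- Eigenvalues of a real symmetric (Hermitian) matrix, listed in descending order. -/
def eigDesc {n : ℕ} {A : Matrix (Fin n) (Fin n) ℝ} (hA : A.IsHermitian) : Fin n → ℝ :=
  fun i => (hA.eigenvalues ∘ Tuple.sort hA.eigenvalues) i.rev

/-- Conjugating a real symmetric (Hermitian) matrix preserves symmetry. -/
theorem conjHerm {n m : ℕ} (V : Matrix (Fin n) (Fin m) ℝ) {C : Matrix (Fin n) (Fin n) ℝ}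
    (hC : C.IsHermitian) : (Vᵀ * C * V).IsHermitian := by
  have h := Matrix.isHermitian_mul_mul_conjTranspose Vᵀ hC
  simpa using h

namespace Matrix

section CommRing

variable {ι R : Type*} [Fintype ι] [CommRing R] {P Q : Matrix ι ι R}

theorem trace_conj_mul_conj_mul_transpose (A B U V : Matrix ι ι R) :
    trace (U * A * Uᵀ * P * (V * B * Vᵀ) * Pᵀ)
      = trace (A * (Uᵀ * P * V) * B * (Uᵀ * P * V)ᵀ) := by
  simp only [transpose_mul, transpose_transpose, mul_assoc]
  rw [trace_mul_comm U]
  simp only [mul_assoc]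

variable [DecidableEq ι]

theorem transpose_mul_self_mul (hP : Pᵀ * P = 1) (hQ : Qᵀ * Q = 1) :
    (P * Q)ᵀ * (P * Q) = 1 := by
  rw [transpose_mul, mul_assoc, ← mul_assoc Pᵀ, hP, one_mul, hQ]

theorem transpose_mul_self_transpose (hP : Pᵀ * P = 1) : Pᵀᵀ * Pᵀ = 1 := by
  rw [transpose_transpose]
  exact mul_eq_one_comm.mp hP

theorem trace_diagonal_mul_mul_diagonal_mul_transpose (a b : ι → R) (Q : Matrix ι ι R) :
    trace (diagonal a * Q * diagonal b * Qᵀ) = ∑ i, ∑ j, a i * b j * Q i j ^ 2 := by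
  simp only [trace, diag_apply, mul_apply, diagonal_apply, ite_mul, zero_mul, Finset.sum_ite_eq,
    Finset.mem_univ, ↓reduceIte, mul_ite, mul_zero, Finset.sum_ite_eq', transpose_apply]
  refine Finset.sum_congr rfl fun i _ => Finset.sum_congr rfl fun j _ => ?_
  ring

end CommRing

section DoublyStochastic

variable {ι R : Type*} [Fintype ι] [DecidableEq ι] [Field R] [LinearOrder R]
  [IsStrictOrderedRing R]

theorem of_sq_mem_doublyStochastic {Q : Matrix ι ι R} (hQ : Qᵀ * Q = 1) :
    of (fun i j => Q i j ^ 2) ∈ doublyStochastic R ι := by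
  rw [mem_doublyStochastic_iff_sum]
  refine ⟨fun i j => sq_nonneg _, fun i => ?_, fun j => ?_⟩
  · simpa [mul_apply, sq] using congrFun₂ (mul_eq_one_comm.mp hQ : Q * Qᵀ = 1) i i
  · simpa [mul_apply, sq] using congrFun₂ hQ j j

theorem sum_sum_mul_mul_le_of_mem_doublyStochastic {a b : ι → R} (hab : Monovary a b)
    {S : Matrix ι ι R} (hS : S ∈ doublyStochastic R ι) :
    ∑ i, ∑ j, a i * b j * S i j ≤ ∑ i, a i * b i := by
  have hlin : IsLinearMap R fun M : Matrix ι ι R => ∑ i, ∑ j, a i * b j * M i j := by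
    refine ⟨fun M N => ?_, fun c M => ?_⟩
    · simp only [add_apply, mul_add, Finset.sum_add_distrib]
    · simp only [smul_apply, smul_eq_mul, Finset.mul_sum]
      exact Finset.sum_congr rfl fun i _ => Finset.sum_congr rfl fun j _ => by ring
  refine convexHull_min ?_ (convex_halfSpace_le hlin _)
    (by rwa [← doublyStochastic_eq_convexHull_permMatrix] : S ∈ convexHull R _)
  rintro _ ⟨σ, rfl⟩
  have hrow : ∀ i, ∑ j, a i * b j * σ.permMatrix R i j = a i * b (σ i) := fun i => by
    simp [Equiv.Perm.permMatrix, PEquiv.toMatrix_apply, mul_ite]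
  simpa only [Set.mem_ofPred_eq, hrow] using hab.sum_mul_comp_perm_le_sum_mul

end DoublyStochastic

end Matrix

theorem eigDesc_antitone {n : ℕ} {A : Matrix (Fin n) (Fin n) ℝ} (hA : A.IsHermitian) :
    Antitone (eigDesc hA) := fun _ _ hij =>
  Tuple.monotone_sort hA.eigenvalues (Fin.rev_le_rev.mpr hij)

theorem exists_orthogonal_diagonalization_eigDesc {n : ℕ}
    {A : Matrix (Fin n) (Fin n) ℝ} (hA : A.IsHermitian) :
    ∃ P : Matrix (Fin n) (Fin n) ℝ, Pᵀ * P = 1 ∧ A = P * diagonal (eigDesc hA) * Pᵀ := by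
  set U : Matrix (Fin n) (Fin n) ℝ := ↑hA.eigenvectorUnitary
  set σ : Equiv.Perm (Fin n) := Fin.revPerm.trans (Tuple.sort hA.eigenvalues)
  have hU : Uᵀ * U = 1 := by
    simpa [star_eq_conjTranspose] using mem_unitaryGroup_iff'.mp hA.eigenvectorUnitary.2
  have hdiag : diagonal (eigDesc hA) = (diagonal hA.eigenvalues).submatrix σ σ := by
    rw [submatrix_diagonal_equiv]
    rfl
  refine ⟨U.submatrix id σ, ?_, ?_⟩
  · rw [transpose_submatrix, ← Equiv.coe_refl, submatrix_mul_equiv, hU, submatrix_one_equiv]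
  · rw [hdiag, transpose_submatrix, ← Equiv.coe_refl, submatrix_mul_equiv, submatrix_mul_equiv]
    simpa [star_eq_conjTranspose] using hA.spectral_theorem

theorem trace_max_orthogonal (n : ℕ) (C D : Matrix (Fin n) (Fin n) ℝ)
    (hC : C.IsHermitian) (hD : D.IsHermitian) :
    IsGreatest ((fun P => Matrix.trace (C * P * D * Pᵀ)) ''
        {P : Matrix (Fin n) (Fin n) ℝ | Pᵀ * P = 1})
      (∑ i, eigDesc hC i * eigDesc hD i)
    ∧ ∀ PC PD : Matrix (Fin n) (Fin n) ℝ,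
        PCᵀ * PC = 1 → PDᵀ * PD = 1 →
        C = PC * Matrix.diagonal (eigDesc hC) * PCᵀ →
        D = PD * Matrix.diagonal (eigDesc hD) * PDᵀ →
        Matrix.trace (C * (PC * PDᵀ) * D * (PC * PDᵀ)ᵀ)
          = ∑ i, eigDesc hC i * eigDesc hD i := by
  have attained : ∀ PC PD : Matrix (Fin n) (Fin n) ℝ, PCᵀ * PC = 1 → PDᵀ * PD = 1 →
      C = PC * diagonal (eigDesc hC) * PCᵀ → D = PD * diagonal (eigDesc hD) * PDᵀ →
      trace (C * (PC * PDᵀ) * D * (PC * PDᵀ)ᵀ) = ∑ i, eigDesc hC i * eigDesc hD i := by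
    intro PC PD hPC hPD hCPC hDPD
    have hQ : PCᵀ * (PC * PDᵀ) * PD = 1 := by rw [← mul_assoc, hPC, one_mul, hPD]
    conv_lhs => rw [hCPC, hDPD, trace_conj_mul_conj_mul_transpose, hQ]
    simp [diagonal_mul_diagonal, trace_diagonal]
  obtain ⟨PC, hPC, hCPC⟩ := exists_orthogonal_diagonalization_eigDesc hC
  obtain ⟨PD, hPD, hDPD⟩ := exists_orthogonal_diagonalization_eigDesc hD
  refine ⟨⟨⟨PC * PDᵀ, transpose_mul_self_mul hPC (transpose_mul_self_transpose hPD),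
    attained PC PD hPC hPD hCPC hDPD⟩, ?_⟩, attained⟩
  rintro _ ⟨P, hP, rfl⟩
  have hQ : (PCᵀ * P * PD)ᵀ * (PCᵀ * P * PD) = 1 :=
    transpose_mul_self_mul (transpose_mul_self_mul (transpose_mul_self_transpose hPC) hP) hPD
  change trace (C * P * D * Pᵀ) ≤ _
  conv_lhs => rw [hCPC, hDPD, trace_conj_mul_conj_mul_transpose,
    trace_diagonal_mul_mul_diagonal_mul_transpose]
  exact sum_sum_mul_mul_le_of_mem_doublyStochastic
    ((eigDesc_antitone hC).monovary (eigDesc_antitone hD)) (of_sq_mem_doublyStochastic hQ)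

end
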